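/- arXiv:2404.03567 — 7 statements merged into one kernel-verified Lean document; each statement's English description precedes it below -/
import Mathlib

section
/- Every minimal infeasible subset of constraints of a Factored-NLP is connected: if Φ′ ⊆ Φ is infeasible and every proper subset of Φ′ is feasible, then any two constraints of Φ′ are joined by a path of constraints in Φ′ in which consecutive constraints have intersecting variable sets. -/
/-- A constraint of a factored nonlinear program over variables indexed by `ι`
with domains `D`: a set of variables together with a predicate on total
assignments that depends only on those variables (locality). -/
structure FNConstraint (ι : Type*) (D : ι → Type*) where
  vars : Set ι
  pred : (∀ i, D i) → Prop
  isLocal : ∀ x y : (∀ i, D i), (∀ i ∈ vars, x i = y i) → (pred x ↔ pred y)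

/-- A set of constraints is feasible if some total assignment satisfies all of
them. -/
def FNFeasible {ι : Type*} {D : ι → Type*} (Φ : Set (FNConstraint ι D)) : Prop :=
  ∃ x : (∀ i, D i), ∀ φ ∈ Φ, φ.pred x

/-- Two constraints are adjacent if their variable sets intersect. -/
def FNAdjacent {ι : Type*} {D : ι → Type*} (φ ψ : FNConstraint ι D) : Prop :=
  (φ.vars ∩ ψ.vars).Nonempty

/-- `FNReach Φ φ ψ`: the constraints `φ` and `ψ` are joined by a path of
adjacent constraints within `Φ`. -/
def FNReach {ι : Type*} {D : ι → Type*} (Φ : Set (FNConstraint ι D))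
    (φ ψ : FNConstraint ι D) : Prop :=
  Relation.ReflTransGen (fun α β => α ∈ Φ ∧ β ∈ Φ ∧ FNAdjacent α β) φ ψ

/-- Every minimal infeasible subset of constraints of a
Factored-NLP is connected: if `Φ'` is infeasible while every proper subset of
`Φ'` is feasible, then any two constraints of `Φ'` are joined by a path of
adjacent constraints within `Φ'`. -/
theorem minimal_infeasible_connected
    {ι : Type*} {D : ι → Type*} (hD : ∀ i, Nonempty (D i))
    (Φ' : Set (FNConstraint ι D))
    (hinf : ¬ FNFeasible Φ')
    (hmin : ∀ Φ'' ⊂ Φ', FNFeasible Φ'') :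
    ∀ φ ∈ Φ', ∀ ψ ∈ Φ', FNReach Φ' φ ψ := by
  classical
  intro φ hφ ψ hψ
  by_contra hreach
  set A : Set (FNConstraint ι D) := {χ | χ ∈ Φ' ∧ FNReach Φ' φ χ} with hA
  have hφA : φ ∈ A := ⟨hφ, Relation.ReflTransGen.refl⟩
  have hAsub : A ⊂ Φ' := ⟨fun χ h => h.1, fun h => hreach (h hψ).2⟩
  have hBsub : Φ' \ A ⊂ Φ' := ⟨Set.diff_subset, fun h => (h hφ).2 hφA⟩
  obtain ⟨x, hx⟩ := hmin A hAsub
  obtain ⟨y, hy⟩ := hmin _ hBsub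
  set V : Set ι := ⋃ χ ∈ A, χ.vars with hV
  refine hinf ⟨fun i => if i ∈ V then x i else y i, ?_⟩
  intro χ hχ
  by_cases hχA : χ ∈ A
  · rw [χ.isLocal _ x (fun i hi => if_pos (Set.mem_biUnion hχA hi))]
    exact hx χ hχA
  · rw [χ.isLocal _ y ?_]
    · exact hy χ ⟨hχ, hχA⟩
    · intro i hi
      refine if_neg fun hiV => ?_
      obtain ⟨χ', hχ'A, hiχ'⟩ := Set.mem_iUnion₂.mp hiV
      exact hχA ⟨hχ, hχ'A.2.tail ⟨hχ'A.1, hχ, ⟨i, hiχ', hi⟩⟩⟩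
end

section
/- Infeasibility propagation from an embedded partial-state sequence: let ⟨s₀, …, s_K⟩ be a sequence of discrete states and ⟨p₀, …, p_L⟩ a sequence of partial states such that for some offset k ∈ {0, …, K − L} one has p_l ⊆ s_{k+l} for all l = 0, …, L. If the Factored-NLP of ⟨p₀, …, p_L⟩ is infeasible, then the Factored-NLP of ⟨s₀, …, s_K⟩ is infeasible. -/
/-- Partial states over discrete variables `V` with domains `Dv`: value
assignments to a subset of the variables.  Total states are the partial states
assigning a value to every variable. -/
abbrev PState (V : Type*) (Dv : V → Type*) := ∀ v, Option (Dv v)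

/-- `PSub p σ` formalizes `p ⊆ σ`: every fact of the partial state `p` also
holds in `σ`. -/
def PSub {V : Type*} {Dv : V → Type*} (p σ : PState V Dv) : Prop :=
  ∀ v x, p v = some x → σ v = some x

/-- Feasibility of the Factored-NLP of the sequence `σ 0, …, σ L`: there are
continuous values `x 0, …, x L` satisfying, for every `l < L` and every pair
`(p, p̃)` of partial states on which the constraint-generation mapping `Pmap`
is defined with `p ⊆ σ l` and `p̃ ⊆ σ (l+1)`, the generated constraint on
`(x l, x (l+1))`. -/
def PNTCFeasible {V ι : Type*} {Dv : V → Type*} {Xc : ι → Type*}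
    (Pmap : PState V Dv → PState V Dv →
      Option ((∀ i, Xc i) → (∀ i, Xc i) → Prop))
    (σ : ℕ → PState V Dv) (L : ℕ) : Prop :=
  ∃ x : ℕ → (∀ i, Xc i), ∀ l < L, ∀ p pt φ,
    Pmap p pt = some φ → PSub p (σ l) → PSub pt (σ (l + 1)) →
      φ (x l) (x (l + 1))

/-- Infeasibility propagation from an embedded partial-state
sequence: if `p₀, …, p_L` is embedded at offset `k` in the sequence of
discrete states `s₀, …, s_K` and the Factored-NLP of `p₀, …, p_L` is
infeasible, then the Factored-NLP of `s₀, …, s_K` is infeasible. -/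
theorem infeasibility_propagation
    {V ι : Type*} {Dv : V → Type*} {Xc : ι → Type*}
    (Pmap : PState V Dv → PState V Dv →
      Option ((∀ i, Xc i) → (∀ i, Xc i) → Prop))
    (hXc : ∀ i, Nonempty (Xc i))
    (s : ℕ → PState V Dv) (K : ℕ) (htotal : ∀ k ≤ K, ∀ v, (s k v).isSome)
    (p : ℕ → PState V Dv) (L : ℕ) (k : ℕ) (hk : k + L ≤ K)
    (hembed : ∀ l ≤ L, PSub (p l) (s (k + l)))
    (hinf : ¬ PNTCFeasible Pmap p L) :
    ¬ PNTCFeasible Pmap s K := by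
  intro ⟨x, hx⟩
  apply hinf
  refine ⟨fun l => x (k + l), fun l hl q qt φ hφ hq hqt => ?_⟩
  have h1 : k + l < K := lt_of_lt_of_le (by omega) hk
  have h2 : k + (l + 1) = k + l + 1 := by omega
  show φ (x (k + l)) (x (k + (l + 1)))
  rw [h2]
  exact hx (k + l) h1 q qt φ hφ
    (fun v a h => hembed l (by omega) v a (hq v a h))
    (fun v a h => by rw [← h2]; exact hembed (l+1) (by omega) v a (hqt v a h))
end

section
/- Soundness of conflict-based pruning in the Factored-NLP planner: let C be any set of finite sequences of partial states, each of whose Factored-NLP is infeasible (the conflicts). If ⟨s₀, …, s_K⟩ is a sequence of discrete states whose Factored-NLP is feasible, then ⟨s₀, …, s_K⟩ contains no element of C at any offset; that is, for every ⟨p₀, …, p_L⟩ ∈ C there is no k ∈ {0, …, K − L} with p_l ⊆ s_{k+l} for all l = 0, …, L. Consequently, forbidding all discrete state sequences that contain some element of C at some offset never removes a state sequence whose Factored-NLP is feasible. -/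
/-- Soundness of conflict-based pruning in the Factored-NLP
planner: let `C` be a set of finite sequences of partial states (given as a
pair of a map `ℕ → PState` and a length `L`, representing `p₀, …, p_L`), each
with infeasible Factored-NLP.  If the Factored-NLP of the discrete state
sequence `s₀, …, s_K` is feasible, then this sequence contains no element of
`C` at any offset. -/
theorem conflict_pruning_sound
    {V ι : Type*} {Dv : V → Type*} {Xc : ι → Type*}
    (Pmap : PState V Dv → PState V Dv →
      Option ((∀ i, Xc i) → (∀ i, Xc i) → Prop))
    (hXc : ∀ i, Nonempty (Xc i))
    (s : ℕ → PState V Dv) (K : ℕ) (htotal : ∀ k ≤ K, ∀ v, (s k v).isSome)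
    (C : Set ((ℕ → PState V Dv) × ℕ))
    (hC : ∀ c ∈ C, ¬ PNTCFeasible Pmap c.1 c.2)
    (hfeas : PNTCFeasible Pmap s K) :
    ∀ c ∈ C, ∀ k, k + c.2 ≤ K → ¬ (∀ l ≤ c.2, PSub (c.1 l) (s (k + l))) := by
  rintro c hc k hk hsub
  obtain ⟨x, hx⟩ := hfeas
  refine hC c hc ⟨fun l => x (k + l), fun l hl p pt φ hφ hp hpt => ?_⟩
  have h1 : PSub p (s (k + l)) := fun v y hv => hsub l (le_of_lt hl) v y (hp v y hv)
  have h2 : PSub pt (s (k + (l + 1))) := fun v y hv =>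
    hsub (l + 1) hl v y (hpt v y hv)
  have := hx (k + l) (by omega) p pt φ hφ h1 (by rwa [← add_assoc] at h2)
  simpa [add_assoc] using this
end

section
/- Existence of a minimal infeasible temporal window: let ⟨s₀, …, s_K⟩ be a sequence of discrete states whose Factored-NLP is infeasible. Then: (i) window feasibility is antitone under window inclusion, i.e. for all 0 ≤ f ≤ f′ ≤ l′ ≤ l ≤ K, if the Factored-NLP of ⟨s_{f′}, …, s_{l′}⟩ is infeasible then so is the Factored-NLP of ⟨s_f, …, s_l⟩; and (ii) there exist indices 0 ≤ f ≤ l ≤ K such that the Factored-NLP of ⟨s_f, …, s_l⟩ is infeasible, l is the minimal index for which the Factored-NLP of ⟨s₀, …, s_l⟩ is infeasible, and, for this l, f is the maximal index for which the Factored-NLP of ⟨s_f, …, s_l⟩ is infeasible. -/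
/-- Feasibility of the Factored-NLP of the temporal window `σ f, …, σ l`:
there are continuous values satisfying, for every step `j` with `f ≤ j < l`
and every pair `(p, p̃)` of partial states on which the constraint-generation
mapping `Pmap` is defined with `p ⊆ σ j` and `p̃ ⊆ σ (j+1)`, the generated
constraint on `(x j, x (j+1))`. -/
def PNTCFeasibleWin {V ι : Type*} {Dv : V → Type*} {Xc : ι → Type*}
    (Pmap : PState V Dv → PState V Dv →
      Option ((∀ i, Xc i) → (∀ i, Xc i) → Prop))
    (σ : ℕ → PState V Dv) (f l : ℕ) : Prop :=
  ∃ x : ℕ → (∀ i, Xc i), ∀ j, f ≤ j → j < l → ∀ p pt φ,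
    Pmap p pt = some φ → PSub p (σ j) → PSub pt (σ (j + 1)) →
      φ (x j) (x (j + 1))

lemma feasible_mono {V ι : Type*} {Dv : V → Type*} {Xc : ι → Type*}
    (Pmap : PState V Dv → PState V Dv →
      Option ((∀ i, Xc i) → (∀ i, Xc i) → Prop))
    (σ : ℕ → PState V Dv) {f f' l' l : ℕ} (hf : f ≤ f') (hl : l' ≤ l)
    (h : PNTCFeasibleWin Pmap σ f l) : PNTCFeasibleWin Pmap σ f' l' := by
  obtain ⟨x, hx⟩ := h
  exact ⟨x, fun j hj1 hj2 p pt φ hφ hp hpt =>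
    hx j (le_trans hf hj1) (lt_of_lt_of_le hj2 hl) p pt φ hφ hp hpt⟩

/-- Existence of a minimal infeasible temporal window: if
the Factored-NLP of `s₀, …, s_K` is infeasible, then (i) window feasibility is
antitone under window inclusion, and (ii) there are indices `f ≤ l ≤ K` such
that the window `s_f, …, s_l` is infeasible, `l` is the minimal index for
which `s₀, …, s_l` is infeasible, and for this `l`, `f` is the maximal index
for which `s_f, …, s_l` is infeasible. -/
theorem exists_minimal_infeasible_window
    {V ι : Type*} {Dv : V → Type*} {Xc : ι → Type*}
    (Pmap : PState V Dv → PState V Dv →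
      Option ((∀ i, Xc i) → (∀ i, Xc i) → Prop))
    (hXc : ∀ i, Nonempty (Xc i))
    (s : ℕ → PState V Dv) (K : ℕ) (htotal : ∀ k ≤ K, ∀ v, (s k v).isSome)
    (hinf : ¬ PNTCFeasibleWin Pmap s 0 K) :
    (∀ f f' l' l : ℕ, f ≤ f' → f' ≤ l' → l' ≤ l → l ≤ K →
        ¬ PNTCFeasibleWin Pmap s f' l' → ¬ PNTCFeasibleWin Pmap s f l) ∧
    (∃ f l : ℕ, f ≤ l ∧ l ≤ K ∧
        ¬ PNTCFeasibleWin Pmap s f l ∧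
        (¬ PNTCFeasibleWin Pmap s 0 l ∧ ∀ l' < l, PNTCFeasibleWin Pmap s 0 l') ∧
        (∀ f', f < f' → f' ≤ l → PNTCFeasibleWin Pmap s f' l)) := by
  have empt : ∀ f, PNTCFeasibleWin Pmap s f f := by
    intro f
    exact ⟨fun _ => fun i => Classical.choice (hXc i),
      fun j hj1 hj2 => absurd (lt_of_le_of_lt hj1 hj2) (lt_irrefl f)⟩
  constructor
  · intro f f' l' l hf hfl hl hK hinf' hfeas
    exact hinf' (feasible_mono Pmap s hf hl hfeas)
  · have hP : ∃ l, ¬ PNTCFeasibleWin Pmap s 0 l := ⟨K, hinf⟩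
    classical
    set l := Nat.find hP with hldef
    have hlspec : ¬ PNTCFeasibleWin Pmap s 0 l := Nat.find_spec hP
    have hlK : l ≤ K := Nat.find_le hinf
    set f := Nat.findGreatest (fun f => ¬ PNTCFeasibleWin Pmap s f l) l with hfdef
    have hfspec : ¬ PNTCFeasibleWin Pmap s f l :=
      Nat.findGreatest_spec (P := fun f => ¬ PNTCFeasibleWin Pmap s f l) (Nat.zero_le l) hlspec
    refine ⟨f, l, Nat.findGreatest_le l, hlK, hfspec, ⟨hlspec, ?_⟩, ?_⟩
    · intro l' hl'
      exact not_not.mp (Nat.find_min hP hl')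
    · intro f' hf' hf'l
      exact not_not.mp (Nat.findGreatest_is_greatest (P := fun f => ¬ PNTCFeasibleWin Pmap s f l) hf' hf'l)
end

section
/- Conditional independence given a separating assignment: let Φ be a set of constraints of a Factored-NLP and let S, A, B be pairwise disjoint subsets of ι such that every constraint φ ∈ Φ satisfies vars(φ) ⊆ S ∪ A or vars(φ) ⊆ S ∪ B. Fix an assignment x_S ∈ Π_{i∈S} D(i). Then there exists a total assignment extending x_S and satisfying every constraint in Φ if and only if both: there exists a total assignment extending x_S satisfying every constraint in Φ_A = {φ ∈ Φ : vars(φ) ⊆ S ∪ A}, and there exists a total assignment extending x_S satisfying every constraint in Φ_B = {φ ∈ Φ : vars(φ) ⊆ S ∪ B}. -/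
/-- Conditional independence given a separating assignment:
if `S`, `A`, `B` are pairwise disjoint sets of variables such that every
constraint of `Φ` has its variables inside `S ∪ A` or inside `S ∪ B`, and
`xS` is a fixed assignment on `S`, then there is a total assignment extending
`xS` satisfying all of `Φ` iff there is one extending `xS` satisfying all of
`Φ_A = {φ ∈ Φ : vars(φ) ⊆ S ∪ A}` and one extending `xS` satisfying all of
`Φ_B = {φ ∈ Φ : vars(φ) ⊆ S ∪ B}`. -/
theorem conditional_independence_given_separator
    {ι : Type*} {D : ι → Type*} (hD : ∀ i, Nonempty (D i))
    (Φ : Set (FNConstraint ι D)) (S A B : Set ι)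
    (hSA : Disjoint S A) (hSB : Disjoint S B) (hAB : Disjoint A B)
    (hcov : ∀ φ ∈ Φ, φ.vars ⊆ S ∪ A ∨ φ.vars ⊆ S ∪ B)
    (xS : ∀ i, i ∈ S → D i) :
    (∃ x : (∀ i, D i), (∀ i, ∀ hi : i ∈ S, x i = xS i hi) ∧ ∀ φ ∈ Φ, φ.pred x) ↔
      ((∃ x : (∀ i, D i), (∀ i, ∀ hi : i ∈ S, x i = xS i hi) ∧
          ∀ φ ∈ Φ, φ.vars ⊆ S ∪ A → φ.pred x) ∧
       (∃ x : (∀ i, D i), (∀ i, ∀ hi : i ∈ S, x i = xS i hi) ∧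
          ∀ φ ∈ Φ, φ.vars ⊆ S ∪ B → φ.pred x)) := by
  constructor
  · rintro ⟨x, hx, hall⟩
    exact ⟨⟨x, hx, fun φ hφ _ => hall φ hφ⟩, ⟨x, hx, fun φ hφ _ => hall φ hφ⟩⟩
  · rintro ⟨⟨xA, hxA, hA⟩, ⟨xB, hxB, hB⟩⟩
    classical
    refine ⟨fun i => if h : i ∈ A then xA i else xB i, ?_, ?_⟩
    · intro i hi
      have hiA : i ∉ A := fun h => hSA.ne_of_mem hi h rfl
      simp [hiA, hxB i hi]
    · intro φ hφ
      rcases hcov φ hφ with hsub | hsub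
      · have := φ.isLocal (fun i => if h : i ∈ A then xA i else xB i) xA ?_
        · exact this.mpr (hA φ hφ hsub)
        · intro i hi
          rcases hsub hi with hS | hA'
          · have hiA : i ∉ A := fun h => hSA.ne_of_mem hS h rfl
            simp [hiA, hxB i hS, hxA i hS]
          · simp [hA']
      · have := φ.isLocal (fun i => if h : i ∈ A then xA i else xB i) xB ?_
        · exact this.mpr (hB φ hφ hsub)
        · intro i hi
          rcases hsub hi with hS | hB'
          · have hiA : i ∉ A := fun h => hSA.ne_of_mem hS h rfl
            simp [hiA]
          · have hiA : i ∉ A := fun h => hAB.ne_of_mem h hB' rfl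
            simp [hiA]
end

section
/- Every minimal infeasible variable-induced subgraph of a Factored-NLP whose constraints all have nonempty variable sets is connected: if G[X_M] is infeasible while G[X″] is feasible for every proper subset X″ ⊊ X_M, then the bipartite graph of G[X_M] is connected. Consequently, if X* denotes the union of the variable sets of all minimal infeasible variable-induced subgraphs of G, then each minimal infeasible variable-induced subgraph G[X_M] is entirely contained in a single connected component of the bipartite graph of G[X*]. -/
/-- Feasibility of the variable-induced subgraph `G[X']`: some assignment
satisfies every constraint whose variables lie inside `X'` (by locality this
only depends on the values on `X'`). -/
def FNInducedFeasible {ι : Type*} {D : ι → Type*}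
    (Φ : Set (FNConstraint ι D)) (X' : Set ι) : Prop :=
  ∃ x : (∀ i, D i), ∀ φ ∈ Φ, φ.vars ⊆ X' → φ.pred x

/-- `G[X']` is a minimal infeasible variable-induced subgraph. -/
def FNMinimalInfeasible {ι : Type*} {D : ι → Type*}
    (Φ : Set (FNConstraint ι D)) (X' : Set ι) : Prop :=
  ¬ FNInducedFeasible Φ X' ∧ ∀ X'' ⊂ X', FNInducedFeasible Φ X''

/-- The vertices of the bipartite graph of `G[X']`: the variables of `X'` and
the constraints of `Φ` whose variables lie inside `X'`. -/
def BipVert {ι : Type*} {D : ι → Type*}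
    (Φ : Set (FNConstraint ι D)) (X' : Set ι) : Set (ι ⊕ FNConstraint ι D) :=
  {w | match w with
    | Sum.inl i => i ∈ X'
    | Sum.inr φ => φ ∈ Φ ∧ φ.vars ⊆ X'}

/-- Adjacency in the bipartite graph of `G[X']`: a variable `i` and a
constraint `φ` of the subgraph are adjacent iff `i ∈ vars(φ)`. -/
def BipAdj {ι : Type*} {D : ι → Type*}
    (Φ : Set (FNConstraint ι D)) (X' : Set ι) :
    (ι ⊕ FNConstraint ι D) → (ι ⊕ FNConstraint ι D) → Prop
  | Sum.inl i, Sum.inr φ => i ∈ X' ∧ φ ∈ Φ ∧ φ.vars ⊆ X' ∧ i ∈ φ.vars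
  | Sum.inr φ, Sum.inl i => i ∈ X' ∧ φ ∈ Φ ∧ φ.vars ⊆ X' ∧ i ∈ φ.vars
  | _, _ => False

/-- Every minimal infeasible variable-induced subgraph of a
Factored-NLP whose constraints all have nonempty variable sets is connected;
consequently, each minimal infeasible subgraph `G[X_M]` is entirely contained
in a single connected component of the bipartite graph of `G[X*]`, where
`X*` is the union of the variable sets of all minimal infeasible subgraphs. -/
theorem minimal_infeasible_induced_subgraph_connected
    {ι : Type*} {D : ι → Type*} (hD : ∀ i, Nonempty (D i))
    (Φ : Set (FNConstraint ι D)) (hvars : ∀ φ ∈ Φ, φ.vars.Nonempty)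
    (XM : Set ι) (hMin : FNMinimalInfeasible Φ XM) :
    (∀ u ∈ BipVert Φ XM, ∀ w ∈ BipVert Φ XM,
        Relation.ReflTransGen (BipAdj Φ XM) u w) ∧
    (∀ u ∈ BipVert Φ XM, ∀ w ∈ BipVert Φ XM,
        Relation.ReflTransGen
          (BipAdj Φ {i | ∃ X : Set ι, FNMinimalInfeasible Φ X ∧ i ∈ X}) u w) := by
  classical
  have hsub : XM ⊆ {i | ∃ X : Set ι, FNMinimalInfeasible Φ X ∧ i ∈ X} :=
    fun i hi => ⟨XM, hMin, hi⟩
  have key : ∀ u ∈ BipVert Φ XM, ∀ w ∈ BipVert Φ XM,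
      Relation.ReflTransGen (BipAdj Φ XM) u w := by
    intro u hu w hw
    by_contra hnr
    set X1 : Set ι :=
      {i | i ∈ XM ∧ Relation.ReflTransGen (BipAdj Φ XM) u (Sum.inl i)} with hX1
    have hIv : ∃ i0, i0 ∈ X1 := by
      cases u with
      | inl i => exact ⟨i, hu, Relation.ReflTransGen.refl⟩
      | inr φ =>
        obtain ⟨hφ, hφs⟩ := hu
        obtain ⟨i, hi⟩ := hvars φ hφ
        exact ⟨i, hφs hi, Relation.ReflTransGen.single ⟨hφs hi, hφ, hφs, hi⟩⟩
    obtain ⟨i0, hi0⟩ := hIv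
    have hJv : ∃ j0, j0 ∈ XM ∧ j0 ∉ X1 := by
      cases w with
      | inl j => exact ⟨j, hw, fun hj => hnr hj.2⟩
      | inr ψ =>
        obtain ⟨hψ, hψs⟩ := hw
        obtain ⟨j, hj⟩ := hvars ψ hψ
        refine ⟨j, hψs hj, fun hjX => hnr ?_⟩
        exact hjX.2.tail ⟨hψs hj, hψ, hψs, hj⟩
    obtain ⟨j0, hj0M, hj0⟩ := hJv
    have hX1sub : X1 ⊆ XM := fun i h => h.1
    set X2 : Set ι := XM \ X1 with hX2
    have hsplit : ∀ φ ∈ Φ, φ.vars ⊆ XM → φ.vars ⊆ X1 ∨ φ.vars ⊆ X2 := by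
      intro φ hφ hφs
      by_cases h : ∃ i ∈ φ.vars, i ∈ X1
      · left
        obtain ⟨i, hiφ, hiX1⟩ := h
        intro j hj
        refine ⟨hφs hj, ?_⟩
        exact (hiX1.2.tail
          (show BipAdj Φ XM (Sum.inl i) (Sum.inr φ) from
            ⟨hφs hiφ, hφ, hφs, hiφ⟩)).tail ⟨hφs hj, hφ, hφs, hj⟩
      · right
        push_neg at h
        exact fun j hj => ⟨hφs hj, h j hj⟩
    obtain ⟨x1, hx1⟩ := hMin.2 X1
      (hX1sub.ssubset_of_ne (fun h => hj0 (h ▸ hj0M)))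
    obtain ⟨x2, hx2⟩ := hMin.2 X2
      ((Set.diff_subset).ssubset_of_ne (fun h => ((Set.ext_iff.mp h i0).mpr hi0.1).2 hi0))
    refine hMin.1 ⟨fun i => if i ∈ X1 then x1 i else x2 i, ?_⟩
    intro φ hφ hφs
    rcases hsplit φ hφ hφs with h | h
    · exact (φ.isLocal _ x1 (fun i hi => by simp [h hi])).mpr (hx1 φ hφ h)
    · exact (φ.isLocal _ x2 (fun i hi => by simp [(h hi).2])).mpr (hx2 φ hφ h)
  refine ⟨key, fun u hu w hw => Relation.ReflTransGen.mono ?_ u w (key u hu w hw)⟩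
  intro a b hab
  match a, b with
  | Sum.inl i, Sum.inr φ =>
    exact ⟨hsub hab.1, hab.2.1, hab.2.2.1.trans hsub, hab.2.2.2⟩
  | Sum.inr φ, Sum.inl i =>
    exact ⟨hsub hab.1, hab.2.1, hab.2.2.1.trans hsub, hab.2.2.2⟩
end

section
/- Exactness of connected-component recovery of minimal infeasible subgraphs: let G be a Factored-NLP whose constraints all have nonempty variable sets, let {G[X_j]}_{j∈J} be the family of all of its minimal infeasible variable-induced subgraphs, and suppose these subgraphs are pairwise disconnected in G, i.e. for j ≠ j′ one has X_j ∩ X_{j′} = ∅ and no constraint φ ∈ Φ has vars(φ) intersecting both X_j and X_{j′}. Let X* = ⋃_{j∈J} X_j be the set of variables belonging to some minimal infeasible subgraph. Then the connected components of the bipartite graph of G[X*] are exactly the bipartite graphs of the minimal infeasible subgraphs G[X_j], j ∈ J. -/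
section Aux

variable {ι : Type*} {D : ι → Type*}

/-- The union of all minimal infeasible variable sets. -/
def FNXstar (Φ : Set (FNConstraint ι D)) : Set ι :=
  {i | ∃ X : Set ι, FNMinimalInfeasible Φ X ∧ i ∈ X}

lemma FNmin_nonempty (hD : ∀ i, Nonempty (D i)) (Φ : Set (FNConstraint ι D))
    (hvars : ∀ φ ∈ Φ, φ.vars.Nonempty) {X : Set ι}
    (hX : FNMinimalInfeasible Φ X) : X.Nonempty := by
  rcases Set.eq_empty_or_nonempty X with h | h
  · exfalso
    apply hX.1
    refine ⟨fun i => (hD i).some, fun φ hφ hsub => ?_⟩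
    rcases hvars φ hφ with ⟨i, hi⟩
    have := hsub hi
    rw [h] at this
    exact absurd this (Set.notMem_empty i)
  · exact h

lemma FNabsorb (Φ : Set (FNConstraint ι D))
    (hdisc : ∀ X₁ X₂ : Set ι, FNMinimalInfeasible Φ X₁ →
        FNMinimalInfeasible Φ X₂ → X₁ ≠ X₂ →
        X₁ ∩ X₂ = ∅ ∧
          ∀ φ ∈ Φ, ¬ ((φ.vars ∩ X₁).Nonempty ∧ (φ.vars ∩ X₂).Nonempty))
    {X : Set ι} (hX : FNMinimalInfeasible Φ X)
    {φ : FNConstraint ι D} (hφ : φ ∈ Φ) (hsub : φ.vars ⊆ FNXstar Φ)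
    (hmeet : (φ.vars ∩ X).Nonempty) : φ.vars ⊆ X := by
  intro j hj
  rcases hsub hj with ⟨X', hX', hjX'⟩
  by_cases hXX : X' = X
  · exact hXX ▸ hjX'
  · exfalso
    exact (hdisc X X' hX hX' (fun h => hXX h.symm)).2 φ hφ ⟨hmeet, ⟨j, hj, hjX'⟩⟩

lemma FNXsub {X : Set ι} {Φ : Set (FNConstraint ι D)}
    (hX : FNMinimalInfeasible Φ X) : X ⊆ FNXstar Φ :=
  fun i hi => ⟨X, hX, hi⟩

lemma FNBipVert_mono {Φ : Set (FNConstraint ι D)} {X Y : Set ι} (h : X ⊆ Y) :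
    BipVert Φ X ⊆ BipVert Φ Y := by
  intro w hw
  cases w with
  | inl i => exact h hw
  | inr φ => exact ⟨hw.1, hw.2.trans h⟩

/-- Invariance: reachability in `G[X*]` from a vertex of `G[X]` stays in `G[X]`. -/
lemma FNinvar (Φ : Set (FNConstraint ι D))
    (hdisc : ∀ X₁ X₂ : Set ι, FNMinimalInfeasible Φ X₁ →
        FNMinimalInfeasible Φ X₂ → X₁ ≠ X₂ →
        X₁ ∩ X₂ = ∅ ∧
          ∀ φ ∈ Φ, ¬ ((φ.vars ∩ X₁).Nonempty ∧ (φ.vars ∩ X₂).Nonempty))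
    {X : Set ι} (hX : FNMinimalInfeasible Φ X)
    {v w : ι ⊕ FNConstraint ι D} (hv : v ∈ BipVert Φ X)
    (h : Relation.ReflTransGen (BipAdj Φ (FNXstar Φ)) v w) : w ∈ BipVert Φ X := by
  induction h with
  | refl => exact hv
  | tail _ hstep ih =>
    rename_i b c _
    cases b with
    | inl i =>
      cases c with
      | inl j => exact absurd hstep id
      | inr φ =>
        obtain ⟨_, hφ, hsub, hivars⟩ := hstep
        have hiX : i ∈ X := ih
        exact ⟨hφ, FNabsorb Φ hdisc hX hφ hsub ⟨i, hivars, hiX⟩⟩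
    | inr φ =>
      cases c with
      | inl j =>
        obtain ⟨_, hφ, hsub, hjvars⟩ := hstep
        exact ih.2 hjvars
      | inr ψ => exact absurd hstep id

/-- Connectivity: `G[X]` is connected inside `G[X*]` for minimal infeasible `X`. -/
lemma FNconn (hD : ∀ i, Nonempty (D i)) (Φ : Set (FNConstraint ι D))
    (hvars : ∀ φ ∈ Φ, φ.vars.Nonempty)
    {X : Set ι} (hX : FNMinimalInfeasible Φ X)
    {v w : ι ⊕ FNConstraint ι D} (hv : v ∈ BipVert Φ X) (hw : w ∈ BipVert Φ X) :
    Relation.ReflTransGen (BipAdj Φ (FNXstar Φ)) v w := by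
  classical
  set R := Relation.ReflTransGen (BipAdj Φ (FNXstar Φ)) with hR
  set Y : Set ι := {i | i ∈ X ∧ R v (Sum.inl i)} with hY
  have hYsub : Y ⊆ X := fun i hi => hi.1
  -- Key step: a constraint inside X touching Y has all its vars in Y and is reachable.
  have key : ∀ φ ∈ Φ, φ.vars ⊆ X → (φ.vars ∩ Y).Nonempty →
      φ.vars ⊆ Y ∧ R v (Sum.inr φ) := by
    intro φ hφ hsubX ⟨i, hivars, hiY⟩
    have hsubs : φ.vars ⊆ FNXstar Φ := hsubX.trans (FNXsub hX)
    have hstep : BipAdj Φ (FNXstar Φ) (Sum.inl i) (Sum.inr φ) :=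
      ⟨FNXsub hX hiY.1, hφ, hsubs, hivars⟩
    have hreachφ : R v (Sum.inr φ) := hiY.2.tail hstep
    refine ⟨fun j hj => ⟨hsubX hj, ?_⟩, hreachφ⟩
    exact hreachφ.tail ⟨FNXsub hX (hsubX hj), hφ, hsubs, hj⟩
  -- Y is nonempty
  have hYne : Y.Nonempty := by
    cases v with
    | inl i => exact ⟨i, hv, Relation.ReflTransGen.refl⟩
    | inr φ =>
      obtain ⟨hφ, hsubX⟩ := hv
      obtain ⟨i, hi⟩ := hvars φ hφ
      refine ⟨i, hsubX hi, Relation.ReflTransGen.single ?_⟩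
      exact ⟨FNXsub hX (hsubX hi), hφ, hsubX.trans (FNXsub hX), hi⟩
  -- Y = X
  have hYX : Y = X := by
    by_contra hne
    have hYss : Y ⊂ X := ⟨hYsub, fun h => hne (le_antisymm hYsub h)⟩
    obtain ⟨x, hx⟩ := hX.2 Y hYss
    have hdiff : X \ Y ⊂ X := by
      obtain ⟨i0, hi0⟩ := hYne
      exact ⟨Set.diff_subset, fun h => (h (hYsub hi0)).2 hi0⟩
    obtain ⟨y, hy⟩ := hX.2 (X \ Y) hdiff
    apply hX.1
    refine ⟨fun i => if i ∈ Y then x i else y i, fun φ hφ hsubX => ?_⟩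
    by_cases hmeet : (φ.vars ∩ Y).Nonempty
    · have hsubY := (key φ hφ hsubX hmeet).1
      have := hx φ hφ hsubY
      rwa [φ.isLocal _ x (fun i hi => if_pos (hsubY hi))]
    · have hsubD : φ.vars ⊆ X \ Y := fun j hj =>
        ⟨hsubX hj, fun hjY => hmeet ⟨j, hj, hjY⟩⟩
      have := hy φ hφ hsubD
      rwa [φ.isLocal _ y (fun i hi => if_neg (hsubD hi).2)]
  -- conclude
  cases w with
  | inl i =>
    have : i ∈ Y := hYX ▸ hw
    exact this.2
  | inr φ =>
    obtain ⟨hφ, hsubX⟩ := hw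
    obtain ⟨i, hi⟩ := hvars φ hφ
    have hiY : i ∈ Y := hYX ▸ hsubX hi
    exact hiY.2.tail ⟨FNXsub hX (hsubX hi), hφ, hsubX.trans (FNXsub hX), hi⟩

end Aux

/-- Exactness of connected-component recovery of minimal
infeasible subgraphs: if all constraints have nonempty variable sets and the
minimal infeasible variable-induced subgraphs of `G` are pairwise disconnected
(disjoint variable sets and no constraint touching two of them), then the
connected components of the bipartite graph of `G[X*]`, where `X*` is the
union of the variable sets of all minimal infeasible subgraphs, are exactly
the bipartite graphs of the minimal infeasible subgraphs. -/
theorem components_exactly_minimal_infeasible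
    {ι : Type*} {D : ι → Type*} (hD : ∀ i, Nonempty (D i))
    (Φ : Set (FNConstraint ι D)) (hvars : ∀ φ ∈ Φ, φ.vars.Nonempty)
    (hdisc : ∀ X₁ X₂ : Set ι, FNMinimalInfeasible Φ X₁ →
        FNMinimalInfeasible Φ X₂ → X₁ ≠ X₂ →
        X₁ ∩ X₂ = ∅ ∧
          ∀ φ ∈ Φ, ¬ ((φ.vars ∩ X₁).Nonempty ∧ (φ.vars ∩ X₂).Nonempty)) :
    {C : Set (ι ⊕ FNConstraint ι D) |
        ∃ v ∈ BipVert Φ {i | ∃ X : Set ι, FNMinimalInfeasible Φ X ∧ i ∈ X},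
          C = {w | w ∈ BipVert Φ {i | ∃ X : Set ι, FNMinimalInfeasible Φ X ∧ i ∈ X} ∧
            Relation.ReflTransGen
              (BipAdj Φ {i | ∃ X : Set ι, FNMinimalInfeasible Φ X ∧ i ∈ X}) v w}} =
      {C : Set (ι ⊕ FNConstraint ι D) |
        ∃ X : Set ι, FNMinimalInfeasible Φ X ∧ C = BipVert Φ X} := by
  
  have hXstar : {i | ∃ X : Set ι, FNMinimalInfeasible Φ X ∧ i ∈ X} = FNXstar Φ := rfl
  rw [hXstar]
  ext C
  simp only [Set.mem_setOf_eq]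
  constructor
  · rintro ⟨v, hv, rfl⟩
    have hvX : ∃ X, FNMinimalInfeasible Φ X ∧ v ∈ BipVert Φ X := by
      cases v with
      | inl i => rcases hv with ⟨X, hX, hi⟩; exact ⟨X, hX, hi⟩
      | inr φ =>
        obtain ⟨hφ, hsub⟩ := hv
        obtain ⟨i, hi⟩ := hvars φ hφ
        obtain ⟨X, hX, hiX⟩ := hsub hi
        exact ⟨X, hX, hφ, FNabsorb Φ hdisc hX hφ hsub ⟨i, hi, hiX⟩⟩
    obtain ⟨X, hX, hvX⟩ := hvX
    refine ⟨X, hX, ?_⟩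
    ext w
    constructor
    · rintro ⟨_, hreach⟩
      exact FNinvar Φ hdisc hX hvX hreach
    · intro hw
      exact ⟨FNBipVert_mono (FNXsub hX) hw, FNconn hD Φ hvars hX hvX hw⟩
  · rintro ⟨X, hX, rfl⟩
    obtain ⟨i0, hi0⟩ := FNmin_nonempty hD Φ hvars hX
    have hi0' : Sum.inl i0 ∈ BipVert Φ X := hi0
    refine ⟨Sum.inl i0, FNXsub hX hi0, ?_⟩
    ext w
    constructor
    · intro hw
      exact ⟨FNBipVert_mono (FNXsub hX) hw, FNconn hD Φ hvars hX hi0' hw⟩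
    · rintro ⟨_, hreach⟩
      exact FNinvar Φ hdisc hX hi0' hreach
end
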